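/- arXiv:2010.01593 — 2 statements merged into one kernel-verified Lean document; each statement's English description precedes it below -/
import Mathlib

section
/- Let n ≥ 3. There is a constant C > 0, independent of h, such that for every h ∈ (0,1] and every continuously differentiable u : (0,∞) → ℝ with compact support in (0,∞), one has ∫₀^∞ ((x+h)/x)² |u(x)|² x^{n-1} dx ≤ C ( ∫₀^∞ |u(x)|² x^{n-1} dx + h² ∫₀^∞ |u'(x)|² x^{n-1} dx ). -/
open MeasureTheory Set Function intervalIntegral

lemma young_aux {p q r ε : ℝ} (hp : 0 ≤ p) (hq : 0 ≤ q) (hr : 0 ≤ r)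
    (hε : 0 < ε) (hpq : r ^ 2 = p * q) : 2 * r ≤ ε * p + ε⁻¹ * q := by
  have key : 2 * ε * r ≤ ε ^ 2 * p + q := by
    rcases hr.eq_or_lt with h0 | h0
    · nlinarith [sq_nonneg ε]
    · have hp0 : 0 < p := by
        rcases hp.eq_or_lt with h | h
        · exfalso; nlinarith
        · exact h
      nlinarith [sq_nonneg (ε * p - r)]
  have h2 : ε * (2 * r) ≤ ε * (ε * p + ε⁻¹ * q) := by
    have : ε * (ε * p + ε⁻¹ * q) = ε ^ 2 * p + q := by
      field_simp
    rw [this]; linarith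
  exact le_of_mul_le_mul_left h2 hε

lemma hardy_const {t A B : ℝ} (ht : 1 ≤ t) (hA : 0 ≤ A) (hB : 0 ≤ B)
    (hle : t / 2 * A ≤ 2 / t * B) : A ≤ 4 * B := by
  have ht0 : (0 : ℝ) < t := lt_of_lt_of_le one_pos ht
  have h2 : t * (t / 2 * A) ≤ t * (2 / t * B) := mul_le_mul_of_nonneg_left hle ht0.le
  have h3 : t * (2 / t * B) = 2 * B := by field_simp
  rw [h3] at h2
  nlinarith [h2, mul_le_mul_of_nonneg_left (by nlinarith : (1:ℝ) ≤ t ^ 2) hA]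

/-- Uniform (in the semiclassical parameter `h ∈ (0,1]`) weighted estimate:
for `n ≥ 3` there is `C > 0` such that for all `h ∈ (0,1]` and all
`u ∈ C_c^1((0,∞))`,
`∫₀^∞ ((x+h)/x)² |u|² x^{n-1} dx ≤ C (∫₀^∞ |u|² x^{n-1} dx + h² ∫₀^∞ |u'|² x^{n-1} dx)`. -/
theorem uniform_weighted_estimate (n : ℕ) (hn : 3 ≤ n) :
    ∃ C > 0, ∀ h ∈ Set.Ioc (0 : ℝ) 1, ∀ u : ℝ → ℝ,
      ContDiff ℝ 1 u → HasCompactSupport u → tsupport u ⊆ Set.Ioi 0 →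
      ∫ x in Set.Ioi (0 : ℝ), ((x + h) / x) ^ 2 * (u x) ^ 2 * x ^ ((n : ℝ) - 1) ≤
        C * ((∫ x in Set.Ioi (0 : ℝ), (u x) ^ 2 * x ^ ((n : ℝ) - 1)) +
             h ^ 2 * ∫ x in Set.Ioi (0 : ℝ), (deriv u x) ^ 2 * x ^ ((n : ℝ) - 1)) := by
  refine ⟨10, by norm_num, ?_⟩
  rintro h ⟨hh0, hh1⟩ u hu hcs hsupp
  set m : ℝ := (n : ℝ) - 1 with hm
  have hm2 : (2 : ℝ) ≤ m := by
    have h3 : (3 : ℝ) ≤ (n : ℝ) := by exact_mod_cast hn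
    simp only [hm]; linarith
  clear_value m
  -- compact support setup
  set K : Set ℝ := insert 1 (tsupport u) with hKdef
  have hKc : IsCompact K := hcs.insert 1
  have hKsub : K ⊆ Set.Ioi 0 := by
    intro x hx
    rcases hx with rfl | hx
    · norm_num
    · exact hsupp hx
  have hKne : K.Nonempty := ⟨1, mem_insert _ _⟩
  set a := sInf K with hadef
  set b := sSup K with hbdef
  have haK : a ∈ K := hKc.sInf_mem hKne
  have ha0 : (0 : ℝ) < a := hKsub haK
  have hab : ∀ x ∈ K, a ≤ x ∧ x ≤ b := fun x hx =>
    ⟨csInf_le hKc.bddBelow hx, le_csSup hKc.bddAbove hx⟩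
  set c := a / 2 with hcdef
  set d := b + 1 with hddef
  have hc0 : (0 : ℝ) < c := by positivity
  have hca : c < a := by simp only [hcdef]; linarith
  have hbd : b < d := lt_add_one b
  have ha1 : a ≤ 1 := (hab 1 (mem_insert _ _)).1
  have h1b : (1 : ℝ) ≤ b := (hab 1 (mem_insert _ _)).2
  have hcd : c ≤ d := by simp only [hcdef, hddef]; linarith
  have hIcc : uIcc c d = Icc c d := uIcc_of_le hcd
  have hxpos : ∀ x ∈ Icc c d, (0 : ℝ) < x := fun x hx => lt_of_lt_of_le hc0 hx.1
  -- supports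
  have hsu : support u ⊆ Ioc c d := by
    intro x hx
    have hx' := hab x (mem_insert_of_mem _ (subset_tsupport u hx))
    exact ⟨lt_of_lt_of_le hca hx'.1, le_of_lt (lt_of_le_of_lt hx'.2 hbd)⟩
  have hsd : support (deriv u) ⊆ Ioc c d := by
    intro x hx
    have hx' := hab x (mem_insert_of_mem _ (support_deriv_subset hx))
    exact ⟨lt_of_lt_of_le hca hx'.1, le_of_lt (lt_of_le_of_lt hx'.2 hbd)⟩
  have huc : u c = 0 := by
    apply image_eq_zero_of_notMem_tsupport
    intro hcts
    exact absurd (hab c (mem_insert_of_mem _ hcts)).1 (not_le.mpr hca)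
  have hud : u d = 0 := by
    apply image_eq_zero_of_notMem_tsupport
    intro hdts
    exact absurd (hab d (mem_insert_of_mem _ hdts)).2 (not_le.mpr hbd)
  -- conversion of integrals
  have conv : ∀ f : ℝ → ℝ, support f ⊆ Ioc c d →
      ∫ x in Set.Ioi (0 : ℝ), f x = ∫ x in c..d, f x := by
    intro f hf
    rw [setIntegral_eq_integral_of_forall_compl_eq_zero (fun x hx => ?_),
      ← integral_eq_integral_of_support_subset hf]
    by_contra hne
    exact hx (lt_trans hc0 (hf (mem_support.mpr hne)).1)
  -- continuity facts
  have hcu : Continuous u := hu.continuous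
  have hcu' : Continuous (deriv u) := hu.continuous_deriv le_rfl
  have hrw : ∀ p : ℝ, ContinuousOn (fun x : ℝ => x ^ p) (Icc c d) := fun p =>
    ContinuousOn.rpow_const continuousOn_id fun x hx => Or.inl (ne_of_gt (hxpos x hx))
  have hint : ∀ f : ℝ → ℝ, ContinuousOn f (Icc c d) → IntervalIntegrable f volume c d :=
    fun f hf => ContinuousOn.intervalIntegrable (by rwa [hIcc])
  -- the four integrands
  set f0 : ℝ → ℝ := fun x => ((x + h) / x) ^ 2 * (u x) ^ 2 * x ^ m with hf0
  set f1 : ℝ → ℝ := fun x => (u x) ^ 2 * x ^ m with hf1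
  set f2 : ℝ → ℝ := fun x => x ^ (m - 2) * (u x) ^ 2 with hf2
  set f3 : ℝ → ℝ := fun x => (deriv u x) ^ 2 * x ^ m with hf3
  have hc0' : ContinuousOn f0 (Icc c d) := by
    refine ContinuousOn.mul (ContinuousOn.mul ?_ ((hcu.continuousOn).pow 2)) (hrw m)
    exact ((continuousOn_id.add continuousOn_const).div continuousOn_id
      fun x hx => ne_of_gt (hxpos x hx)).pow 2
  have hc1' : ContinuousOn f1 (Icc c d) := ((hcu.continuousOn).pow 2).mul (hrw m)
  have hc2' : ContinuousOn f2 (Icc c d) := (hrw (m - 2)).mul ((hcu.continuousOn).pow 2)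
  have hc3' : ContinuousOn f3 (Icc c d) := ((hcu'.continuousOn).pow 2).mul (hrw m)
  have hi0 := hint f0 hc0'
  have hi1 := hint f1 hc1'
  have hi2 := hint f2 hc2'
  have hi3 := hint f3 hc3'
  -- conversions
  have hs0 : support f0 ⊆ Ioc c d := by
    intro x hx
    apply hsu
    simp only [mem_support, hf0] at hx ⊢
    intro h0; apply hx; simp [h0]
  have hs1 : support f1 ⊆ Ioc c d := by
    intro x hx
    apply hsu
    simp only [mem_support, hf1] at hx ⊢
    intro h0; apply hx; simp [h0]
  have hs3 : support f3 ⊆ Ioc c d := by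
    intro x hx
    apply hsd
    simp only [mem_support, hf3] at hx ⊢
    intro h0; apply hx; simp [h0]
  have e0 : ∫ x in Set.Ioi (0 : ℝ), f0 x = ∫ x in c..d, f0 x := conv f0 hs0
  have e1 : ∫ x in Set.Ioi (0 : ℝ), f1 x = ∫ x in c..d, f1 x := conv f1 hs1
  have e3 : ∫ x in Set.Ioi (0 : ℝ), f3 x = ∫ x in c..d, f3 x := conv f3 hs3
  -- nonnegativity
  have hrpnn : ∀ x ∈ Icc c d, (0 : ℝ) ≤ x ^ m := fun x hx => Real.rpow_nonneg (hxpos x hx).le m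
  have hI1nn : 0 ≤ ∫ x in c..d, f1 x :=
    intervalIntegral.integral_nonneg hcd fun x hx =>
      mul_nonneg (sq_nonneg _) (hrpnn x hx)
  have hI2nn : 0 ≤ ∫ x in c..d, f2 x :=
    intervalIntegral.integral_nonneg hcd fun x hx =>
      mul_nonneg (Real.rpow_nonneg (hxpos x hx).le _) (sq_nonneg _)
  have hI3nn : 0 ≤ ∫ x in c..d, f3 x :=
    intervalIntegral.integral_nonneg hcd fun x hx =>
      mul_nonneg (sq_nonneg _) (hrpnn x hx)
  clear_value K a b c d f0 f1 f2 f3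
  -- Step A : f0 ≤ 2 f1 + 2 h² f2 pointwise on [c,d]
  have stepA : ∫ x in c..d, f0 x ≤
      (∫ x in c..d, (2 * f1 x + 2 * h ^ 2 * f2 x)) := by
    apply intervalIntegral.integral_mono_on hcd hi0
      (((hi1.const_mul 2)).add ((hi2.const_mul (2 * h ^ 2))))
    intro x hx
    have hx0 : (0 : ℝ) < x := hxpos x hx
    have key : (x + h) ^ 2 ≤ 2 * x ^ 2 + 2 * h ^ 2 := by nlinarith [sq_nonneg (x - h)]
    have hnn : (0 : ℝ) ≤ (u x) ^ 2 * x ^ m / x ^ 2 :=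
      div_nonneg (mul_nonneg (sq_nonneg _) (hrpnn x hx)) (sq_nonneg x)
    have calc1 : f0 x = (x + h) ^ 2 * ((u x) ^ 2 * x ^ m / x ^ 2) := by
      simp only [hf0]; rw [div_pow]; ring
    have hx2 : x ^ (m - 2) = x ^ m / x ^ 2 := by
      rw [Real.rpow_sub hx0 m 2, Real.rpow_two]
    have calc2 : (2 * x ^ 2 + 2 * h ^ 2) * ((u x) ^ 2 * x ^ m / x ^ 2)
        = 2 * f1 x + 2 * h ^ 2 * f2 x := by
      simp only [hf1, hf2]
      rw [hx2]
      field_simp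
    rw [calc1, ← calc2]
    exact mul_le_mul_of_nonneg_right key hnn
  have stepA' : ∫ x in c..d, f0 x ≤
      2 * (∫ x in c..d, f1 x) + 2 * h ^ 2 * (∫ x in c..d, f2 x) := by
    calc ∫ x in c..d, f0 x ≤ ∫ x in c..d, (2 * f1 x + 2 * h ^ 2 * f2 x) := stepA
      _ = 2 * (∫ x in c..d, f1 x) + 2 * h ^ 2 * (∫ x in c..d, f2 x) := by
          rw [intervalIntegral.integral_add (hi1.const_mul 2) (hi2.const_mul (2 * h ^ 2)),
            intervalIntegral.integral_const_mul, intervalIntegral.integral_const_mul]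
  -- Step B : Hardy, ∫ f2 ≤ 4 ∫ f3
  have stepB : ∫ x in c..d, f2 x ≤ 4 * ∫ x in c..d, f3 x := by
    set G : ℝ → ℝ := fun x => x ^ (m - 1) * (u x) ^ 2 with hG
    set g : ℝ → ℝ := fun x =>
      (m - 1) * x ^ (m - 2) * (u x) ^ 2 + x ^ (m - 1) * (2 * u x * deriv u x) with hg
    have hgc : ContinuousOn g (Icc c d) :=
      ((continuousOn_const.mul (hrw (m - 2))).mul ((hcu.continuousOn).pow 2)).add
        ((hrw (m - 1)).mul ((continuousOn_const.mul hcu.continuousOn).mul hcu'.continuousOn))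
    have hgi : IntervalIntegrable g volume c d := hint g hgc
    have hderiv : ∀ x ∈ uIcc c d, HasDerivAt G (g x) x := by
      intro x hx
      rw [hIcc] at hx
      have hx0 : x ≠ 0 := ne_of_gt (hxpos x hx)
      have h1 : HasDerivAt (fun y : ℝ => y ^ (m - 1)) ((m - 1) * x ^ (m - 2)) x := by
        have := Real.hasDerivAt_rpow_const (x := x) (p := m - 1) (Or.inl hx0)
        convert this using 2
        ring
      have h2 : HasDerivAt (fun y => (u y) ^ 2) (2 * u x * deriv u x) x := by
        have hd := (hu.differentiable one_ne_zero x).hasDerivAt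
        have hp2 := hd.pow 2
        simp at hp2
        exact hp2
      exact h1.mul h2
    have hIBP : ∫ x in c..d, g x = 0 := by
      rw [intervalIntegral.integral_eq_sub_of_hasDerivAt hderiv hgi]
      simp [hG, huc, hud]
    -- split the integral
    set J := ∫ x in c..d, x ^ (m - 1) * (u x * deriv u x) with hJ
    have hJi : IntervalIntegrable (fun x => x ^ (m - 1) * (u x * deriv u x)) volume c d :=
      hint _ ((hrw (m - 1)).mul ((hcu.continuousOn).mul hcu'.continuousOn))
    have hsplit : (m - 1) * (∫ x in c..d, f2 x) + 2 * J = 0 := by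
      rw [hJ, ← intervalIntegral.integral_const_mul, ← intervalIntegral.integral_const_mul,
        ← intervalIntegral.integral_add (hi2.const_mul (m - 1)) (hJi.const_mul 2), ← hIBP]
      congr 1
      ext x
      simp only [hf2, hg]
      ring
    -- Young
    obtain ⟨ε, hε⟩ : ∃ ε : ℝ, ε = (m - 1) / 2 := ⟨_, rfl⟩
    have hε0 : 0 < ε := by simp only [hε]; linarith
    have young : ∫ x in c..d, (-2) * (x ^ (m - 1) * (u x * deriv u x)) ≤
        ∫ x in c..d, (ε * f2 x + ε⁻¹ * f3 x) := by
      apply intervalIntegral.integral_mono_on hcd (hJi.const_mul (-2))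
        ((hi2.const_mul ε).add (hi3.const_mul ε⁻¹))
      intro x hx
      have hx0 : (0 : ℝ) < x := hxpos x hx
      have hrsq : (x ^ (m - 1)) ^ 2 = x ^ (m - 2) * x ^ m := by
        rw [sq, ← Real.rpow_add hx0, ← Real.rpow_add hx0]
        congr 1
        ring
      have hy := young_aux (p := f2 x) (q := f3 x)
        (r := |x ^ (m - 1) * (u x * deriv u x)|)
        (by rw [hf2]; exact mul_nonneg (Real.rpow_nonneg hx0.le _) (sq_nonneg _))
        (by rw [hf3]; exact mul_nonneg (sq_nonneg _) (hrpnn x hx)) (abs_nonneg _) hε0 ?_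
      · calc (-2) * (x ^ (m - 1) * (u x * deriv u x))
            ≤ 2 * |x ^ (m - 1) * (u x * deriv u x)| := by
              rw [neg_mul]
              calc -(2 * (x ^ (m - 1) * (u x * deriv u x)))
                  ≤ |2 * (x ^ (m - 1) * (u x * deriv u x))| := neg_le_abs _
                _ = 2 * |x ^ (m - 1) * (u x * deriv u x)| := by
                    rw [abs_mul]; norm_num
          _ ≤ ε * f2 x + ε⁻¹ * f3 x := hy
      · rw [sq_abs]
        simp only [hf2, hf3]
        rw [mul_pow, hrsq]
        ring
    have hyval : ∫ x in c..d, (ε * f2 x + ε⁻¹ * f3 x)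
        = ε * (∫ x in c..d, f2 x) + ε⁻¹ * (∫ x in c..d, f3 x) := by
      rw [intervalIntegral.integral_add (hi2.const_mul ε) (hi3.const_mul ε⁻¹),
        intervalIntegral.integral_const_mul, intervalIntegral.integral_const_mul]
    have hL : ∫ x in c..d, (-2) * (x ^ (m - 1) * (u x * deriv u x)) = -2 * J := by
      rw [hJ, ← intervalIntegral.integral_const_mul]
    have hkey : (m - 1) * (∫ x in c..d, f2 x) ≤
        ε * (∫ x in c..d, f2 x) + ε⁻¹ * (∫ x in c..d, f3 x) := by
      have := young
      rw [hL, hyval] at this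
      linarith [hsplit]
    -- conclude
    have ht : (1 : ℝ) ≤ m - 1 := by linarith
    have hεi : ε⁻¹ = 2 / (m - 1) := by rw [hε, inv_div]
    have h5 : (m - 1) / 2 * (∫ x in c..d, f2 x) ≤ 2 / (m - 1) * ∫ x in c..d, f3 x := by
      rw [hεi, hε] at hkey
      linarith
    exact hardy_const ht hI2nn hI3nn h5
  -- combine
  rw [e0, e1, e3]
  have hh2 : (0 : ℝ) ≤ h ^ 2 := sq_nonneg h
  linarith [stepA', hI1nn, hI3nn, mul_le_mul_of_nonneg_left stepB hh2,
    mul_nonneg hh2 hI3nn]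
end

section
/- Let m ≥ 1, j ∈ ℕ, w ∈ ℂ with Re w < 0, and let Γ ⊂ ℂ \ {0} be a ray Γ = {t e^{iφ} : t > 0} with φ ∈ (π/2, 3π/2). Suppose b : (ℝⁿ \ {0}) × Γ → ℂ is continuous, satisfies the joint homogeneity b(θζ, θ^m λ) = θ^{-m-j} b(ζ, λ) for all θ > 0, and that λ ↦ λ^w b(ζ,λ) is absolutely integrable along Γ for each ζ ≠ 0. Then B(ζ) := (i/2π) ∫_Γ λ^w b(ζ, λ) dλ satisfies B(θζ) = θ^{mw - j} B(ζ) for all θ > 0 and ζ ≠ 0. -/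
open MeasureTheory Complex

lemma ofReal_mul_cpow_aux {r : ℝ} (hr : 0 < r) {z : ℂ} (hz : z ≠ 0) (w : ℂ) :
    ((r : ℂ) * z) ^ w = (r : ℂ) ^ w * z ^ w := by
  have hr' : (r : ℂ) ≠ 0 := by exact_mod_cast hr.ne'
  rw [Complex.cpow_def_of_ne_zero (mul_ne_zero hr' hz),
    Complex.cpow_def_of_ne_zero hr', Complex.cpow_def_of_ne_zero hz,
    Complex.log_ofReal_mul hr hz, ← Complex.ofReal_log hr.le, add_mul,
    Complex.exp_add]

/-- Homogeneity of Seeley's symbol integral: if `b` is continuous on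
`(ℝⁿ \ {0}) × Γ`, where `Γ = {t e^{iφ} : t > 0}` with `φ ∈ (π/2, 3π/2)`, is
jointly homogeneous `b(θζ, θ^m λ) = θ^{-m-j} b(ζ,λ)`, and `λ ↦ λ^w b(ζ,λ)` is
absolutely integrable along `Γ`, then
`B(ζ) = (i/2π) ∫_Γ λ^w b(ζ,λ) dλ` satisfies `B(θζ) = θ^{mw-j} B(ζ)`. -/
theorem seeley_symbol_homogeneity (n m j : ℕ) (hm : 1 ≤ m) (w : ℂ) (hw : w.re < 0)
    (φ : ℝ) (hφ : φ ∈ Set.Ioo (Real.pi / 2) (3 * Real.pi / 2))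
    (b : (Fin n → ℝ) → ℂ → ℂ)
    (hcont : ContinuousOn (fun p : (Fin n → ℝ) × ℂ => b p.1 p.2)
      ({ζ : Fin n → ℝ | ζ ≠ 0} ×ˢ
        {lam : ℂ | ∃ t : ℝ, 0 < t ∧ lam = (t : ℂ) * Complex.exp ((φ : ℂ) * I)}))
    (hhom : ∀ θ : ℝ, 0 < θ → ∀ ζ : Fin n → ℝ, ζ ≠ 0 → ∀ lam : ℂ,
      (∃ t : ℝ, 0 < t ∧ lam = (t : ℂ) * Complex.exp ((φ : ℂ) * I)) →
      b (θ • ζ) (((θ : ℂ) ^ (m : ℕ)) * lam) = (θ : ℂ) ^ (-(m : ℂ) - (j : ℂ)) * b ζ lam)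
    (hint : ∀ ζ : Fin n → ℝ, ζ ≠ 0 →
      IntegrableOn (fun t : ℝ =>
        ((t : ℂ) * Complex.exp ((φ : ℂ) * I)) ^ w *
          b ζ ((t : ℂ) * Complex.exp ((φ : ℂ) * I)) * Complex.exp ((φ : ℂ) * I))
        (Set.Ioi 0)) :
    ∀ θ : ℝ, 0 < θ → ∀ ζ : Fin n → ℝ, ζ ≠ 0 →
      (I / (2 * (Real.pi : ℂ))) *
        (∫ t in Set.Ioi (0 : ℝ),
          ((t : ℂ) * Complex.exp ((φ : ℂ) * I)) ^ w *
            b (θ • ζ) ((t : ℂ) * Complex.exp ((φ : ℂ) * I)) * Complex.exp ((φ : ℂ) * I))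
      = (θ : ℂ) ^ ((m : ℂ) * w - (j : ℂ)) *
        ((I / (2 * (Real.pi : ℂ))) *
          (∫ t in Set.Ioi (0 : ℝ),
            ((t : ℂ) * Complex.exp ((φ : ℂ) * I)) ^ w *
              b ζ ((t : ℂ) * Complex.exp ((φ : ℂ) * I)) * Complex.exp ((φ : ℂ) * I))) := by
  intro θ hθ ζ hζ
  set E : ℂ := Complex.exp ((φ : ℂ) * I) with hE
  have hEne : E ≠ 0 := Complex.exp_ne_zero _
  set c : ℝ := θ ^ m with hc
  have hcpos : 0 < c := pow_pos hθ m
  have hθC : (θ : ℂ) ≠ 0 := by exact_mod_cast hθ.ne'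
  set f : ℝ → ℂ := fun t =>
    ((t : ℂ) * E) ^ w * b (θ • ζ) ((t : ℂ) * E) * E with hf
  set g : ℝ → ℂ := fun t =>
    ((t : ℂ) * E) ^ w * b ζ ((t : ℂ) * E) * E with hg
  -- change of variables
  have hsub : (∫ t in Set.Ioi (0 : ℝ), f (c * t)) = c⁻¹ • ∫ t in Set.Ioi (0 : ℝ), f t := by
    simpa using MeasureTheory.integral_comp_mul_left_Ioi f 0 hcpos
  have hK : (θ : ℂ) ^ ((m : ℂ) * w) = ((c : ℝ) : ℂ) ^ w := by
    have := Complex.cpow_mul_ofReal_nonneg hθ.le (m : ℝ) w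
    rw [← Real.rpow_natCast θ m] at hc
    push_cast at this ⊢
    rw [hc]; exact this
  -- pointwise identity on Ioi 0
  have hpt : ∀ t ∈ Set.Ioi (0 : ℝ),
      f (c * t) = ((c : ℝ) : ℂ) ^ w * ((θ : ℂ) ^ (-(m : ℂ) - (j : ℂ)) * g t) := by
    intro t ht
    have ht' : (0 : ℝ) < t := ht
    have htE : (t : ℂ) * E ≠ 0 :=
      mul_ne_zero (by exact_mod_cast ht'.ne') hEne
    have harg : ((c * t : ℝ) : ℂ) * E = ((θ : ℂ) ^ (m : ℕ)) * ((t : ℂ) * E) := by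
      rw [hc, Complex.ofReal_mul, Complex.ofReal_pow]; ring
    have hbb : b (θ • ζ) (((θ : ℂ) ^ (m : ℕ)) * ((t : ℂ) * E)) =
        (θ : ℂ) ^ (-(m : ℂ) - (j : ℂ)) * b ζ ((t : ℂ) * E) :=
      hhom θ hθ ζ hζ _ ⟨t, ht', rfl⟩
    have hcpow : (((c * t : ℝ) : ℂ) * E) ^ w = ((c : ℝ) : ℂ) ^ w * ((t : ℂ) * E) ^ w := by
      have : ((c * t : ℝ) : ℂ) * E = ((c : ℝ) : ℂ) * ((t : ℂ) * E) := by
        rw [Complex.ofReal_mul]; ring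
      rw [this, ofReal_mul_cpow_aux hcpos htE]
    simp only [hf, hg]
    rw [harg, hbb, ← harg, hcpow]
    ring
  have hintg : (∫ t in Set.Ioi (0 : ℝ), f (c * t))
      = ((c : ℝ) : ℂ) ^ w * ((θ : ℂ) ^ (-(m : ℂ) - (j : ℂ)) *
          ∫ t in Set.Ioi (0 : ℝ), g t) := by
    rw [MeasureTheory.setIntegral_congr_fun measurableSet_Ioi hpt]
    rw [MeasureTheory.integral_const_mul, MeasureTheory.integral_const_mul]
  -- combine
  have hmain : (∫ t in Set.Ioi (0 : ℝ), f t)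
      = (θ : ℂ) ^ ((m : ℂ) * w - (j : ℂ)) * ∫ t in Set.Ioi (0 : ℝ), g t := by
    have h1 : (∫ t in Set.Ioi (0 : ℝ), f t) = c • ∫ t in Set.Ioi (0 : ℝ), f (c * t) := by
      rw [hsub, smul_smul, mul_inv_cancel₀ hcpos.ne', one_smul]
    rw [h1, hintg, ← hK]
    rw [Complex.real_smul]
    have hcC : ((c : ℝ) : ℂ) = (θ : ℂ) ^ ((m : ℂ)) := by
      rw [hc]; push_cast
      rw [← Complex.cpow_natCast]
    rw [hcC, ← mul_assoc, ← mul_assoc, ← Complex.cpow_add _ _ hθC,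
      ← Complex.cpow_add _ _ hθC,
      show ((m : ℂ) + (m : ℂ) * w) + (-(m : ℂ) - (j : ℂ)) = (m : ℂ) * w - (j : ℂ) by ring]
  rw [hmain]; ring
end
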